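/- For square matrices A (m×m) and B (n×n) over an algebraically closed field, the linear operator X ↦ A·X − X·B on m×n matrices has eigenvalues exactly λ − μ where λ is an eigenvalue of A and μ an eigenvalue of B. -/

import Mathlib

/-!
If `A X - X B = c X` with `X ≠ 0`, then `A - c` intertwines with `B` through `X`, so
`χ_B(A - c) X = X χ_B(B) = 0` and `χ_B(A - c)` is singular; by the spectral mapping theorem `χ_B`
vanishes at an eigenvalue of `A - c`. Conversely, if `A v = λ v` and `wᵀ B = μ wᵀ`, the rank-one
matrix `v wᵀ` is an eigenvector of `X ↦ A X - X B` for `λ - μ`.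
-/

open Polynomial Matrix

namespace Matrix

variable {l m : Type*} [Fintype l] [DecidableEq l] [Fintype m] [DecidableEq m]

section CommSemiring

variable {R : Type*} [CommSemiring R] {A : Matrix l l R} {B : Matrix m m R} {X : Matrix l m R}

theorem pow_mul_eq_mul_pow_of_mul_eq_mul (h : A * X = X * B) (k : ℕ) :
    A ^ k * X = X * B ^ k := by
  induction k with
  | zero => simp
  | succ k ih =>
    rw [pow_succ, pow_succ, Matrix.mul_assoc, h, ← Matrix.mul_assoc, ih, Matrix.mul_assoc]

theorem aeval_mul_eq_mul_aeval_of_mul_eq_mul (h : A * X = X * B) (p : R[X]) :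
    aeval A p * X = X * aeval B p := by
  simp only [aeval_eq_sum_range, Matrix.sum_mul, Matrix.mul_sum, Matrix.smul_mul,
    Matrix.mul_smul, pow_mul_eq_mul_pow_of_mul_eq_mul h]

end CommSemiring

section CommRing

variable {R : Type*} [CommRing R]

theorem isRoot_charpoly_sub_scalar_iff (A : Matrix l l R) (c μ : R) :
    (A - scalar l c).charpoly.IsRoot μ ↔ A.charpoly.IsRoot (c + μ) := by
  rw [charpoly_sub_scalar, IsRoot, IsRoot, eval_comp, eval_add, eval_X, eval_C, add_comm]

omit [DecidableEq l] [DecidableEq m] in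
theorem exists_ne_zero_mul_sub_mul_eq_smul [NoZeroDivisors R] {A : Matrix l l R}
    {B : Matrix m m R} {v : l → R} {w : m → R} {a b : R} (hv : v ≠ 0) (hw : w ≠ 0)
    (hAv : A *ᵥ v = a • v) (hwB : w ᵥ* B = b • w) :
    ∃ X : Matrix l m R, X ≠ 0 ∧ A * X - X * B = (a - b) • X := by
  refine ⟨vecMulVec v w, ?_, ?_⟩
  · obtain ⟨i, hi⟩ := Function.ne_iff.mp hv
    obtain ⟨j, hj⟩ := Function.ne_iff.mp hw
    exact fun h => mul_ne_zero hi hj congr($h i j)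
  · rw [mul_vecMulVec, vecMulVec_mul, hAv, hwB, smul_vecMulVec, vecMulVec_smul, sub_smul]

end CommRing

section Field

variable {K : Type*} [Field K]

theorem exists_mulVec_eq_smul_of_isRoot_charpoly {A : Matrix l l K} {μ : K}
    (h : A.charpoly.IsRoot μ) : ∃ v ≠ 0, A *ᵥ v = μ • v := by
  rw [IsRoot, eval_charpoly, ← exists_mulVec_eq_zero_iff] at h
  obtain ⟨v, hv, hμ⟩ := h
  refine ⟨v, hv, ?_⟩
  rwa [sub_mulVec, scalar_apply, ← smul_one_eq_diagonal, smul_mulVec, one_mulVec, sub_eq_zero,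
    eq_comm] at hμ

theorem exists_vecMul_eq_smul_of_isRoot_charpoly {A : Matrix l l K} {μ : K}
    (h : A.charpoly.IsRoot μ) : ∃ w ≠ 0, w ᵥ* A = μ • w := by
  rw [IsRoot, eval_charpoly, ← exists_vecMul_eq_zero_iff] at h
  obtain ⟨w, hw, hμ⟩ := h
  refine ⟨w, hw, ?_⟩
  rwa [vecMul_sub, scalar_apply, ← smul_one_eq_diagonal, vecMul_smul, vecMul_one, sub_eq_zero,
    eq_comm] at hμ

theorem exists_isRoot_charpoly_of_mul_eq_mul [IsAlgClosed K] {A : Matrix l l K}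
    {B : Matrix m m K} {X : Matrix l m K} (h : A * X = X * B) (hX : X ≠ 0) :
    ∃ μ, A.charpoly.IsRoot μ ∧ B.charpoly.IsRoot μ := by
  have : Nonempty l := by
    by_contra hl
    rw [not_nonempty_iff] at hl
    exact hX (Subsingleton.elim _ _)
  have hker : aeval A B.charpoly * X = 0 := by
    rw [aeval_mul_eq_mul_aeval_of_mul_eq_mul h, aeval_self_charpoly, Matrix.mul_zero]
  have hsing : ¬IsUnit (aeval A B.charpoly) := by
    rintro ⟨u, hu⟩
    apply hX
    rw [← Matrix.one_mul X, ← u.inv_mul, Matrix.mul_assoc, hu, hker, Matrix.mul_zero]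
  rw [← spectrum.zero_mem_iff K, spectrum.map_polynomial_aeval_of_nonempty _ _
    (spectrum.nonempty_of_isAlgClosed_of_finiteDimensional K A)] at hsing
  obtain ⟨μ, hA, hB⟩ := hsing
  exact ⟨μ, mem_spectrum_iff_isRoot_charpoly.mp hA, hB⟩

end Field

end Matrix

/-- Over an algebraically closed field, the eigenvalues of the operator
`X ↦ A·X − X·B` on `m×n` matrices are exactly the differences `λ − μ` of eigenvalues
of `A` and `B`. -/
theorem sylvester_operator_eigenvalues {K : Type*} [Field K] [IsAlgClosed K] {m n : ℕ}
    (A : Matrix (Fin m) (Fin m) K) (B : Matrix (Fin n) (Fin n) K) (c : K) :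
    (∃ X : Matrix (Fin m) (Fin n) K, X ≠ 0 ∧ A * X - X * B = c • X) ↔
    (∃ lam μ : K, A.charpoly.IsRoot lam ∧ B.charpoly.IsRoot μ ∧ c = lam - μ) := by
  constructor
  · rintro ⟨X, hX, hcX⟩
    have hint : (A - scalar _ c) * X = X * B := by
      rw [Matrix.sub_mul, scalar_apply, ← smul_one_eq_diagonal, Matrix.smul_mul,
        Matrix.one_mul, ← hcX, sub_sub_cancel]
    obtain ⟨μ, hA, hB⟩ := exists_isRoot_charpoly_of_mul_eq_mul hint hX
    exact ⟨c + μ, μ, (isRoot_charpoly_sub_scalar_iff A c μ).mp hA, hB, by ring⟩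
  · rintro ⟨lam, μ, hA, hB, rfl⟩
    obtain ⟨v, hv, hAv⟩ := exists_mulVec_eq_smul_of_isRoot_charpoly hA
    obtain ⟨w, hw, hwB⟩ := exists_vecMul_eq_smul_of_isRoot_charpoly hB
    exact exists_ne_zero_mul_sub_mul_eq_smul hv hw hAv hwB
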